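/- Retrodictive error relationship for the Arthurs–Kelly process: for every unit vector Ψ in E, ‖ε_Xi Ψ‖ · ‖ε_Pi Ψ‖ ≥ ħ/2. -/

import Mathlib

open scoped ComplexInnerProductSpace

noncomputable section

variable {E : Type*} [NormedAddCommGroup E] [InnerProductSpace ℂ E]

/-- The commutator of two operators. -/
def commOp (A B : E →ₗ[ℂ] E) : E →ₗ[ℂ] E := A ∘ₗ B - B ∘ₗ A

/-- Final Heisenberg-picture position: `x_f = x + πP`. -/
def xf (x piP : E →ₗ[ℂ] E) : E →ₗ[ℂ] E := x + piP

/-- Final Heisenberg-picture momentum: `p_f = p − πX`. -/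
def pf (p piX : E →ₗ[ℂ] E) : E →ₗ[ℂ] E := p - piX

/-- Final X-pointer observable: `μXf = μX + x + (1/2) • πP`. -/
def muXf (muX x piP : E →ₗ[ℂ] E) : E →ₗ[ℂ] E := muX + x + (1 / 2 : ℂ) • piP

/-- Final P-pointer observable: `μPf = μP + p − (1/2) • πX`. -/
def muPf (muP p piX : E →ₗ[ℂ] E) : E →ₗ[ℂ] E := muP + p - (1 / 2 : ℂ) • piX

/-- Retrodictive X error operator: `ε_Xi = μXf − x`. -/
def epsXi (muX x piP : E →ₗ[ℂ] E) : E →ₗ[ℂ] E := muXf muX x piP - x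

/-- Retrodictive P error operator: `ε_Pi = μPf − p`. -/
def epsPi (muP p piX : E →ₗ[ℂ] E) : E →ₗ[ℂ] E := muPf muP p piX - p

/-- Predictive X error operator: `ε_Xf = μXf − x_f`. -/
def epsXf (muX x piP : E →ₗ[ℂ] E) : E →ₗ[ℂ] E := muXf muX x piP - xf x piP

/-- Predictive P error operator: `ε_Pf = μPf − p_f`. -/
def epsPf (muP p piX : E →ₗ[ℂ] E) : E →ₗ[ℂ] E := muPf muP p piX - pf p piX

/-- X disturbance operator: `δ_X = x_f − x`. -/
def deltaX (x piP : E →ₗ[ℂ] E) : E →ₗ[ℂ] E := xf x piP - x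

/-- P disturbance operator: `δ_P = p_f − p`. -/
def deltaP (p piX : E →ₗ[ℂ] E) : E →ₗ[ℂ] E := pf p piX - p


lemma AK_key (A B : E →ₗ[ℂ] E) (hA : A.IsSymmetric) (hB : B.IsSymmetric)
    (c : ℂ) (h : commOp A B = c • (LinearMap.id : E →ₗ[ℂ] E)) (Ψ : E) (hΨ : ‖Ψ‖ = 1) :
    ‖c‖ / 2 ≤ ‖A Ψ‖ * ‖B Ψ‖ := by
  set z : ℂ := ⟪A Ψ, B Ψ⟫
  have h0 : A (B Ψ) - B (A Ψ) = c • Ψ := by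
    have := congrArg (fun T : E →ₗ[ℂ] E => T Ψ) h
    simpa [commOp] using this
  have h1 : ⟪Ψ, A (B Ψ) - B (A Ψ)⟫ = c := by
    rw [h0, inner_smul_right, inner_self_eq_norm_sq_to_K, hΨ]
    norm_num
  have h2 : ⟪Ψ, A (B Ψ)⟫ = z := (hA Ψ (B Ψ)).symm
  have h3 : ⟪Ψ, B (A Ψ)⟫ = (starRingEnd ℂ) z := by
    rw [← hB Ψ (A Ψ)]
    exact (inner_conj_symm _ _).symm
  have hc : c = z - (starRingEnd ℂ) z := by
    rw [← h1, inner_sub_right, h2, h3]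
  have hnorm : ‖c‖ ≤ 2 * ‖z‖ := by
    rw [hc, Complex.sub_conj]
    rw [norm_mul]
    simp [Complex.norm_real, Complex.norm_I]
    exact Complex.abs_im_le_norm z
  have hz : ‖z‖ ≤ ‖A Ψ‖ * ‖B Ψ‖ := norm_inner_le_norm _ _
  linarith

lemma AK_commOp_add_left (A B C : E →ₗ[ℂ] E) : commOp (A + B) C = commOp A C + commOp B C := by
  simp only [commOp, LinearMap.add_comp, LinearMap.comp_add]; abel

lemma AK_commOp_add_right (A B C : E →ₗ[ℂ] E) : commOp A (B + C) = commOp A B + commOp A C := by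
  simp only [commOp, LinearMap.add_comp, LinearMap.comp_add]; abel

lemma AK_commOp_smul_left (a : ℂ) (A B : E →ₗ[ℂ] E) : commOp (a • A) B = a • commOp A B := by
  simp only [commOp, LinearMap.smul_comp, LinearMap.comp_smul, smul_sub]

lemma AK_commOp_smul_right (a : ℂ) (A B : E →ₗ[ℂ] E) : commOp A (a • B) = a • commOp A B := by
  simp only [commOp, LinearMap.smul_comp, LinearMap.comp_smul, smul_sub]

lemma AK_commOp_anti (A B : E →ₗ[ℂ] E) : commOp A B = - commOp B A := by
  simp only [commOp]; abel

lemma AK_isSymm_smul_real (r : ℝ) (A : E →ₗ[ℂ] E) (hA : A.IsSymmetric) :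
    ((r : ℂ) • A).IsSymmetric := by
  intro u v
  rw [LinearMap.smul_apply, LinearMap.smul_apply, inner_smul_left, inner_smul_right,
    Complex.conj_ofReal, hA u v]

/-- Retrodictive error relationship for the Arthurs–Kelly process. -/
theorem arthurs_kelly_retrodictive_error_relation
    (hbar : ℝ) (hhbar : 0 < hbar)
    (x p muX piX muP piP : E →ₗ[ℂ] E)
    (hx : x.IsSymmetric) (hp : p.IsSymmetric)
    (hmuX : muX.IsSymmetric) (hpiX : piX.IsSymmetric)
    (hmuP : muP.IsSymmetric) (hpiP : piP.IsSymmetric)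
    (hxp : commOp x p = (Complex.I * (hbar : ℂ)) • (LinearMap.id : E →ₗ[ℂ] E))
    (hmuXpiX : commOp muX piX = (Complex.I * (hbar : ℂ)) • (LinearMap.id : E →ₗ[ℂ] E))
    (hmuPpiP : commOp muP piP = (Complex.I * (hbar : ℂ)) • (LinearMap.id : E →ₗ[ℂ] E))
    (hxmuX : commOp x muX = 0) (hxpiX : commOp x piX = 0)
    (hxmuP : commOp x muP = 0) (hxpiP : commOp x piP = 0)
    (hpmuX : commOp p muX = 0) (hppiX : commOp p piX = 0)
    (hpmuP : commOp p muP = 0) (hppiP : commOp p piP = 0)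
    (hmuXmuP : commOp muX muP = 0) (hmuXpiP : commOp muX piP = 0)
    (hpiXmuP : commOp piX muP = 0) (hpiXpiP : commOp piX piP = 0)
    (Ψ : E) (hΨ : ‖Ψ‖ = 1) :
    hbar / 2 ≤ ‖epsXi muX x piP Ψ‖ * ‖epsPi muP p piX Ψ‖ := by
  have hA : epsXi muX x piP = muX + (1 / 2 : ℂ) • piP := by
    rw [epsXi, muXf]; abel
  have hB : epsPi muP p piX = muP + (-(1 / 2) : ℂ) • piX := by
    rw [epsPi, muPf, neg_smul, ← sub_eq_add_neg]; abel
  have hhalf : ((1 / 2 : ℝ) : ℂ) = (1 / 2 : ℂ) := by norm_num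
  have hAs : (epsXi muX x piP).IsSymmetric := by
    rw [hA, ← hhalf]; exact hmuX.add (AK_isSymm_smul_real _ _ hpiP)
  have hBs : (epsPi muP p piX).IsSymmetric := by
    have : ((-(1 / 2) : ℝ) : ℂ) = (-(1 / 2) : ℂ) := by norm_num
    rw [hB, ← this]; exact hmuP.add (AK_isSymm_smul_real _ _ hpiX)
  have hcomm : commOp (epsXi muX x piP) (epsPi muP p piX)
      = (-(Complex.I * (hbar : ℂ))) • (LinearMap.id : E →ₗ[ℂ] E) := by
    rw [hA, hB, AK_commOp_add_left, AK_commOp_add_right, AK_commOp_add_right,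
      AK_commOp_smul_left, AK_commOp_smul_left, AK_commOp_smul_right, AK_commOp_smul_right,
      hmuXmuP, hmuXpiX, AK_commOp_anti piP muP, hmuPpiP, AK_commOp_anti piP piX, hpiXpiP]
    simp only [neg_zero, smul_zero, smul_neg, smul_smul, zero_add, add_zero]
    rw [← neg_smul, ← add_smul]
    congr 1
    ring
  have hres := AK_key _ _ hAs hBs _ hcomm Ψ hΨ
  have hn : ‖(-(Complex.I * (hbar : ℂ)))‖ = hbar := by
    simp [abs_of_pos hhbar]
  rw [hn] at hres
  exact hres


end
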